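/- Critical distortion D_max for the nonanticipative RDF (Lemma 5, finite-alphabet form): let 𝒳_0,…,𝒳_n and 𝒴_0,…,𝒴_n be nonempty finite sets, P a probability measure on ∏𝒳_i, and d : (∏𝒳_i) × (∏𝒴_i) → [0,∞) a function. Define R^{na}_{0,n}(D) as the infimum (in [0,∞]) of the Kullback–Leibler divergence of μ from the product of its two marginals, over all joint probability measures μ on (∏𝒳_i) × (∏𝒴_i) whose ∏𝒳_i-marginal equals P, which satisfy ∫ d dμ ≤ (n+1)D, and for which, for every i = 0,…,n−1, (X_{i+1},…,X_n) is conditionally independent of (Y_0,…,Y_i) given (X_0,…,X_i) under μ. Set D_max := min over y ∈ ∏𝒴_i of (1/(n+1)) ∫ d(x, y) dP(x). Then R^{na}_{0,n}(D) = 0 for every D ≥ D_max, and R^{na}_{0,n}(D) > 0 for every D with 0 ≤ D < D_max. -/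

import Mathlib

/-!
Always reconstructing a minimiser `y⋆` of `y ↦ ∫ d(x, y) dP` gives the joint law `P ⊗ δ_{y⋆}`:
its output is independent of the source (so the mutual information is `0`), it satisfies every
conditional independence constraint because `Y` is almost surely constant, and its distortion is
exactly `(n + 1) D_max`. Conversely, for an admissible `μ` the product `ν = P ⊗ μ_Y` of its
marginals has distortion at least `(n + 1) D_max`, so if `D < D_max` the distortions under `μ` and
`ν` differ by at least `(n + 1)(D_max - D)`. As `d` is bounded on the finite space, this bounds
`‖μ - ν‖₁` from below, and a Pinsker-type inequality turns it into a lower bound on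
`KL(μ ‖ ν) = I(X; Y)` that does not depend on `μ`.
-/

open MeasureTheory ProbabilityTheory
open scoped NNReal ENNReal Classical

/-- Kullback–Leibler divergence of `μ` from `ν`: `∫ log(dμ/dν) dμ` when `μ ≪ ν` and the
log-likelihood ratio is `μ`-integrable, and `∞` otherwise. -/
noncomputable def klDivergence {α : Type*} [MeasurableSpace α] (μ ν : Measure α) : ℝ≥0∞ :=
  if μ ≪ ν ∧ Integrable (llr μ ν) μ then ENNReal.ofReal (∫ x, llr μ ν x ∂μ) else ∞

/-- Mutual information `I(X^n; Y^n)` of a joint measure on a product space: the KL divergence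
of the joint measure from the product of its two marginals. -/
noncomputable def mutualInfoProd {α β : Type*} [MeasurableSpace α] [MeasurableSpace β]
    (μ : Measure (α × β)) : ℝ≥0∞ :=
  klDivergence μ ((μ.map Prod.fst).prod (μ.map Prod.snd))

open Real InformationTheory

lemma two_mul_sub_two_mul_sqrt_mul_le_mul_log {p q : ℝ} (hp : 0 ≤ p) (hq : 0 ≤ q)
    (hqp : q = 0 → p = 0) : 2 * p - 2 * √(p * q) ≤ p * log (p / q) := by
  rcases hp.eq_or_lt with rfl | hp
  · simp
  rcases hq.eq_or_lt with rfl | hq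
  · exact absurd (hqp rfl) hp.ne'
  obtain ⟨a, ha, rfl⟩ : ∃ a, 0 < a ∧ a ^ 2 = p := ⟨√p, sqrt_pos.2 hp, sq_sqrt hp.le⟩
  obtain ⟨b, hb, rfl⟩ : ∃ b, 0 < b ∧ b ^ 2 = q := ⟨√q, sqrt_pos.2 hq, sq_sqrt hq.le⟩
  have hlog : log (a ^ 2 / b ^ 2) = -2 * log (b / a) := by
    rw [← div_pow, log_pow, ← inv_div b a, log_inv]
    push_cast; ring
  have hsqrt : √(a ^ 2 * b ^ 2) = a * b := by
    rw [← mul_pow, sqrt_sq (mul_pos ha hb).le]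
  have hle : a ^ 2 * log (b / a) ≤ a * b - a ^ 2 := by
    calc a ^ 2 * log (b / a) ≤ a ^ 2 * (b / a - 1) :=
          mul_le_mul_of_nonneg_left (log_le_sub_one_of_pos (div_pos hb ha)) (sq_nonneg a)
      _ = a * b - a ^ 2 := by field_simp
  rw [hlog, hsqrt]
  linarith

lemma sq_sum_abs_sub_le_eight_mul_one_sub_sum_sqrt_mul {ι : Type*} [Fintype ι] {p q : ι → ℝ}
    (hp : ∀ i, 0 ≤ p i) (hq : ∀ i, 0 ≤ q i) (hp1 : ∑ i, p i = 1) (hq1 : ∑ i, q i = 1) :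
    (∑ i, |p i - q i|) ^ 2 ≤ 8 * (1 - ∑ i, √(p i * q i)) := by
  set s := ∑ i, √(p i * q i)
  have habs : ∀ i, |√(p i) - √(q i)| * (√(p i) + √(q i)) = |p i - q i| := fun i => by
    rw [← abs_of_nonneg (add_nonneg (sqrt_nonneg (p i)) (sqrt_nonneg (q i))), ← abs_mul,
      mul_comm, ← sq_sub_sq, sq_sqrt (hp i), sq_sqrt (hq i)]
  have hsub : ∑ i, |√(p i) - √(q i)| ^ 2 = 2 - 2 * s := by
    simp only [sq_abs, sub_sq, sq_sqrt (hp _), sq_sqrt (hq _), mul_assoc, ← sqrt_mul (hp _)]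
    rw [Finset.sum_add_distrib, Finset.sum_sub_distrib, hp1, hq1, ← Finset.mul_sum]
    ring
  have hadd : ∑ i, (√(p i) + √(q i)) ^ 2 = 2 + 2 * s := by
    simp only [add_sq, sq_sqrt (hp _), sq_sqrt (hq _), mul_assoc, ← sqrt_mul (hp _)]
    rw [Finset.sum_add_distrib, Finset.sum_add_distrib, hp1, hq1, ← Finset.mul_sum]
    ring
  have hcs := Finset.sum_mul_sq_le_sq_mul_sq Finset.univ
    (fun i => |√(p i) - √(q i)|) (fun i => √(p i) + √(q i))
  simp only [habs, hsub, hadd] at hcs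
  nlinarith [sq_nonneg (1 - s)]

/-- Pinsker's inequality with the constant `1/4` instead of `1/2`, as it comes out of the
Hellinger affinity `∑ √(p q)`. -/
lemma sq_sum_abs_sub_div_four_le_sum_mul_log {ι : Type*} [Fintype ι] {p q : ι → ℝ}
    (hp : ∀ i, 0 ≤ p i) (hq : ∀ i, 0 ≤ q i) (hqp : ∀ i, q i = 0 → p i = 0)
    (hp1 : ∑ i, p i = 1) (hq1 : ∑ i, q i = 1) :
    (∑ i, |p i - q i|) ^ 2 / 4 ≤ ∑ i, p i * log (p i / q i) := by
  have hpoint := Finset.sum_le_sum fun i (_ : i ∈ Finset.univ) =>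
    two_mul_sub_two_mul_sqrt_mul_le_mul_log (hp i) (hq i) (hqp i)
  rw [Finset.sum_sub_distrib, ← Finset.mul_sum, ← Finset.mul_sum, hp1] at hpoint
  linarith [sq_sum_abs_sub_le_eight_mul_one_sub_sum_sqrt_mul hp hq hp1 hq1]

lemma klDivergence_eq_klDiv {α : Type*} [MeasurableSpace α] {μ ν : Measure α}
    (h : μ.real Set.univ = ν.real Set.univ) : klDivergence μ ν = klDiv μ ν := by
  rw [klDivergence, klDiv_def, h, add_sub_cancel_right]

section Marginals

variable {α β : Type*} [MeasurableSpace α] [MeasurableSpace β]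

lemma mutualInfoProd_eq_klDiv (μ : Measure (α × β)) [IsProbabilityMeasure μ] :
    mutualInfoProd μ = klDiv μ ((μ.map Prod.fst).prod (μ.map Prod.snd)) := by
  have := Measure.isProbabilityMeasure_map (μ := μ) measurable_fst.aemeasurable
  have := Measure.isProbabilityMeasure_map (μ := μ) measurable_snd.aemeasurable
  exact klDivergence_eq_klDiv (by simp)

lemma mutualInfoProd_prod (P : Measure α) (Q : Measure β) [IsProbabilityMeasure P]
    [IsProbabilityMeasure Q] : mutualInfoProd (P.prod Q) = 0 := by
  rw [mutualInfoProd_eq_klDiv, Measure.map_fst_prod, Measure.map_snd_prod]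
  simp

end Marginals

namespace MeasureTheory.Measure

variable {α : Type*} [MeasurableSpace α] [Countable α] [MeasurableSingletonClass α]

lemma rnDeriv_ae_eq_div_singleton (μ ν : Measure α) [IsFiniteMeasure ν] (hμν : μ ≪ ν) :
    μ.rnDeriv ν =ᵐ[ν] fun z => μ {z} / ν {z} := by
  have hdens : ν.withDensity (fun z => μ {z} / ν {z}) = μ := by
    refine ext_of_singleton fun z => ?_
    rw [withDensity_apply _ (measurableSet_singleton z), lintegral_singleton]
    rcases eq_or_ne (ν {z}) 0 with h0 | h0
    · rw [h0, mul_zero, hμν h0]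
    · exact ENNReal.div_mul_cancel h0 (measure_ne_top ν _)
  have h := rnDeriv_withDensity ν (f := fun z => μ {z} / ν {z}) .of_discrete
  rwa [hdens] at h

end MeasureTheory.Measure

section Finite

variable {α : Type*} [Fintype α] [MeasurableSpace α] [DiscreteMeasurableSpace α]

lemma integral_llr_eq_sum (μ ν : Measure α) [IsFiniteMeasure μ] [IsFiniteMeasure ν]
    (hμν : μ ≪ ν) : ∫ z, llr μ ν z ∂μ = ∑ z, μ.real {z} * log (μ.real {z} / ν.real {z}) := by
  have hllr : llr μ ν =ᵐ[μ] fun z => log (μ.real {z} / ν.real {z}) := by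
    filter_upwards [hμν.ae_le (μ.rnDeriv_ae_eq_div_singleton ν hμν)] with z hz
    simp only [llr_def, hz, ENNReal.toReal_div, measureReal_def]
  rw [integral_congr_ae hllr, integral_fintype .of_finite]
  rfl

lemma sq_sum_abs_sub_div_four_le_klDiv (μ ν : Measure α) [IsProbabilityMeasure μ]
    [IsProbabilityMeasure ν] :
    ENNReal.ofReal ((∑ z, |μ.real {z} - ν.real {z}|) ^ 2 / 4) ≤ klDiv μ ν := by
  by_cases hμν : μ ≪ ν
  swap; · simp [hμν]
  rw [klDiv_of_ac_of_integrable hμν .of_finite, integral_llr_eq_sum μ ν hμν]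
  refine ENNReal.ofReal_le_ofReal ?_
  simp only [probReal_univ, add_sub_cancel_right]
  refine sq_sum_abs_sub_div_four_le_sum_mul_log (fun _ => measureReal_nonneg)
    (fun _ => measureReal_nonneg) (fun z hz => ?_) ?_ ?_
  · exact (measureReal_eq_zero_iff).2 (hμν ((measureReal_eq_zero_iff).1 hz))
  all_goals simp [sum_measureReal_singleton]

lemma integral_sub_integral_le_mul_sum_abs_sub (μ ν : Measure α) [IsFiniteMeasure μ]
    [IsFiniteMeasure ν] {f : α → ℝ} {M : ℝ} (hf : ∀ z, |f z| ≤ M) :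
    ∫ z, f z ∂ν - ∫ z, f z ∂μ ≤ M * ∑ z, |μ.real {z} - ν.real {z}| := by
  rw [integral_fintype .of_finite, integral_fintype .of_finite, ← Finset.sum_sub_distrib,
    Finset.mul_sum]
  refine Finset.sum_le_sum fun z _ => ?_
  rw [smul_eq_mul, smul_eq_mul, ← sub_mul, abs_sub_comm]
  calc (ν.real {z} - μ.real {z}) * f z ≤ |ν.real {z} - μ.real {z}| * |f z| := by
        rw [← abs_mul]; exact le_abs_self _
    _ ≤ M * |ν.real {z} - μ.real {z}| := by
        rw [mul_comm]; exact mul_le_mul_of_nonneg_right (hf z) (abs_nonneg _)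

lemma ofReal_sq_div_le_klDiv_of_le_integral_sub (μ ν : Measure α) [IsProbabilityMeasure μ]
    [IsProbabilityMeasure ν] {f : α → ℝ} {M a : ℝ} (hM : 0 < M) (hf : ∀ z, |f z| ≤ M)
    (ha : 0 ≤ a) (hgap : a ≤ ∫ z, f z ∂ν - ∫ z, f z ∂μ) :
    ENNReal.ofReal ((a / M) ^ 2 / 4) ≤ klDiv μ ν := by
  refine le_trans (ENNReal.ofReal_le_ofReal ?_) (sq_sum_abs_sub_div_four_le_klDiv μ ν)
  have hL1 : a / M ≤ ∑ z, |μ.real {z} - ν.real {z}| := by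
    rw [div_le_iff₀' hM]
    exact hgap.trans (integral_sub_integral_le_mul_sum_abs_sub μ ν hf)
  gcongr

end Finite

lemma condIndepFun_of_ae_eq_const {Ω β γ : Type*} {m' mΩ : MeasurableSpace Ω}
    [StandardBorelSpace Ω] (hm' : m' ≤ mΩ) [MeasurableSpace β] [MeasurableSpace γ]
    {μ : Measure Ω} [IsFiniteMeasure μ] (f : Ω → β) {g : Ω → γ} {c : γ}
    (hg : g =ᵐ[μ] fun _ => c) : CondIndepFun m' hm' f g μ := by
  refine Kernel.IndepFun.congr' (condIndepFun_const_right f c) (ae_of_all _ fun _ => .rfl) ?_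
  refine Measure.ae_ae_of_ae_comp ?_
  rw [condExpKernel_comp_trim]
  exact hg.symm

section Product

variable {α β : Type*} [MeasurableSpace α] [MeasurableSpace β] [MeasurableSingletonClass β]
  (P : Measure α) [SFinite P] (y : β)

lemma integral_prod_dirac (f : α × β → ℝ) :
    ∫ z, f z ∂(P.prod (.dirac y)) = ∫ x, f (x, y) ∂P := by
  rw [Measure.prod_dirac, (measurableEmbedding_prod_mk_right y).integral_map]

lemma ae_snd_eq_of_prod_dirac :
    ∀ᵐ z ∂(P.prod (.dirac y)), z.2 = y := by
  rw [Measure.prod_dirac, (measurableEmbedding_prod_mk_right y).ae_map_iff]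
  exact ae_of_all _ fun _ => rfl

end Product

lemma le_integral_prod_of_forall_le {α β : Type*} [MeasurableSpace α] [MeasurableSpace β]
    (P : Measure α) (Q : Measure β) [IsProbabilityMeasure P] [IsProbabilityMeasure Q]
    {f : α × β → ℝ} (hf : Integrable f (P.prod Q)) {c : ℝ} (hc : ∀ y, c ≤ ∫ x, f (x, y) ∂P) :
    c ≤ ∫ z, f z ∂(P.prod Q) := by
  rw [integral_prod_symm f hf]
  calc c = ∫ _, c ∂Q := by simp
    _ ≤ _ := integral_mono (integrable_const c) hf.integral_prod_right hc

/-- **Critical distortion `D_max` for the nonanticipative RDF** (Lemma 5, finite-alphabet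
form): with `D_max := min_{y} (1/(n+1)) ∫ d(x, y) dP(x)`, the nonanticipative RDF
`R^{na}_{0,n}(D)` vanishes for every `D ≥ D_max` and is strictly positive for every
`0 ≤ D < D_max`. -/
theorem nonanticipativeRDF_Dmax
    {n : ℕ} (𝒳 𝒴 : Fin (n + 1) → Type*)
    [∀ j, Fintype (𝒳 j)]
    [∀ j, MeasurableSpace (𝒳 j)] [∀ j, DiscreteMeasurableSpace (𝒳 j)]
    [∀ j, Fintype (𝒴 j)] [∀ j, Nonempty (𝒴 j)]
    [∀ j, MeasurableSpace (𝒴 j)] [∀ j, DiscreteMeasurableSpace (𝒴 j)]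
    (Psrc : Measure ((j : Fin (n + 1)) → 𝒳 j)) [IsProbabilityMeasure Psrc]
    (d : (((j : Fin (n + 1)) → 𝒳 j) × ((j : Fin (n + 1)) → 𝒴 j)) → ℝ)
    (R : ℝ → ℝ≥0∞)
    (hR : R = fun D =>
      ⨅ μ ∈ {μ : ProbabilityMeasure
          (((j : Fin (n + 1)) → 𝒳 j) × ((j : Fin (n + 1)) → 𝒴 j)) |
          μ.toMeasure.map Prod.fst = Psrc ∧
          (∫ z, d z ∂μ.toMeasure) ≤ (n + 1) * D ∧
          ∀ i : ℕ, ∀ hi : i < n,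
            CondIndepFun
              (MeasurableSpace.comap
                (fun ω : ((j : Fin (n + 1)) → 𝒳 j) × ((j : Fin (n + 1)) → 𝒴 j) =>
                  fun j : Fin (i + 1) => ω.1 (Fin.castLE (by omega) j)) inferInstance)
              ((measurable_pi_lambda _ fun j : Fin (i + 1) =>
                  (measurable_pi_apply _).comp measurable_fst).comap_le)
              (fun ω => fun j : Fin (n - i) => ω.1 ⟨i + 1 + j.1, by have := j.isLt; omega⟩)
              (fun ω => fun j : Fin (i + 1) => ω.2 (Fin.castLE (by omega) j))
              μ.toMeasure},
        mutualInfoProd μ.toMeasure)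
    (Dmax : ℝ)
    (hDmax : Dmax = ⨅ y : (j : Fin (n + 1)) → 𝒴 j,
      (1 / (n + 1) : ℝ) * ∫ x, d (x, y) ∂Psrc) :
    (∀ D : ℝ, Dmax ≤ D → R D = 0) ∧
    (∀ D : ℝ, 0 ≤ D → D < Dmax → 0 < R D) := by
  have hn : (0 : ℝ) < n + 1 := by positivity
  have hDmax' : (n + 1) * Dmax = ⨅ y, ∫ x, d (x, y) ∂Psrc := by
    rw [hDmax, Real.mul_iInf_of_nonneg hn.le]
    simp_rw [← mul_assoc, mul_one_div_cancel hn.ne', one_mul]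
  obtain ⟨ystar, hystar⟩ := exists_eq_ciInf_of_finite (f := fun y => ∫ x, d (x, y) ∂Psrc)
  have hle (y) : (n + 1) * Dmax ≤ ∫ x, d (x, y) ∂Psrc :=
    hDmax' ▸ ciInf_le (Finite.bddBelow_range _) y
  subst hR
  refine ⟨fun D hD => le_antisymm ?_ bot_le, fun D _ hD => ?_⟩
  · refine iInf₂_le_of_le (⟨Psrc.prod (.dirac ystar), inferInstance⟩ : ProbabilityMeasure _)
      ⟨?_, ?_, fun _ _ => ?_⟩ (mutualInfoProd_prod _ _).le <;>
      simp only [ProbabilityMeasure.coe_mk]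
    · simp [Measure.map_fst_prod]
    · rw [integral_prod_dirac, hystar, ← hDmax']
      gcongr
    · exact condIndepFun_of_ae_eq_const _ _
        ((ae_snd_eq_of_prod_dirac Psrc ystar).mono fun ω hω => by dsimp only; rw [hω])
  · obtain ⟨M, hM, hdM⟩ : ∃ M, 0 < M ∧ ∀ z, |d z| ≤ M :=
      ⟨∑ z, |d z| + 1, by positivity, fun z =>
        (Finset.single_le_sum (fun z _ => abs_nonneg (d z)) (Finset.mem_univ z)).trans
          (le_add_of_nonneg_right zero_le_one)⟩
    have hgap : 0 < (n + 1) * (Dmax - D) := mul_pos hn (sub_pos.2 hD)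
    refine (ENNReal.ofReal_pos.2 (by positivity : 0 < ((n + 1) * (Dmax - D) / M) ^ 2 / 4)).trans_le
      (le_iInf₂ fun μ ⟨hfst, hdist, _⟩ => ?_)
    have := Measure.isProbabilityMeasure_map (μ := μ.toMeasure) measurable_snd.aemeasurable
    rw [mutualInfoProd_eq_klDiv, hfst]
    refine ofReal_sq_div_le_klDiv_of_le_integral_sub _ _ hM hdM hgap.le ?_
    linarith [le_integral_prod_of_forall_le Psrc (μ.toMeasure.map Prod.snd) .of_finite hle]
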